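/- The quantum W1 norm is superadditive with respect to the bipartition of the qudits: for any X ∈ O_{m+n}^T (a traceless self-adjoint operator on (ℂ^d)^{⊗(m+n)}), one has ‖X‖_{W1} ≥ ‖Tr_{m+1,…,m+n} X‖_{W1} + ‖Tr_{1,…,m} X‖_{W1}, where Tr_{m+1,…,m+n} and Tr_{1,…,m} denote the partial traces over the last n and the first m qudits respectively; in particular, for any quantum states ρ, σ ∈ S_{m+n}, ‖ρ − σ‖_{W1} ≥ ‖ρ_{1…m} − σ_{1…m}‖_{W1} + ‖ρ_{m+1…m+n} − σ_{m+1…m+n}‖_{W1}. -/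

import Mathlib

open scoped BigOperators
open scoped Classical
open scoped ComplexOrder

noncomputable section

namespace QW1

/-- Configurations of `n` qudits of local dimension `d`:
the index set of the canonical basis of `(ℂ^d)^{⊗ n}`. -/
abbrev Cfg (d n : ℕ) : Type := Fin n → Fin d

/-- Linear operators on the Hilbert space of `n` qudits, represented as matrices
in the canonical basis. -/
abbrev Mat (d n : ℕ) : Type := Matrix (Cfg d n) (Cfg d n) ℂ

/-- The trace norm `‖A‖₁ = Tr √(Aᴴ A)`. -/
noncomputable def traceNorm {ι : Type} [Fintype ι] [DecidableEq ι] (A : Matrix ι ι ℂ) : ℝ :=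
  ((((Matrix.posSemidef_conjTranspose_mul_self A).1.eigenvectorUnitary : Matrix ι ι ℂ) *
    Matrix.diagonal (fun i => ((Real.sqrt ((Matrix.posSemidef_conjTranspose_mul_self A).1.eigenvalues i) : ℝ) : ℂ)) *
    (star ((Matrix.posSemidef_conjTranspose_mul_self A).1.eigenvectorUnitary : Matrix ι ι ℂ))).trace).re

/-- The operator norm `‖A‖_∞`. -/
noncomputable def opNorm {ι : Type} [Fintype ι] [DecidableEq ι] (A : Matrix ι ι ℂ) : ℝ :=
  ‖Matrix.toEuclideanCLM (𝕜 := ℂ) A‖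

/-- Quantum states: positive semidefinite operators with unit trace. -/
def IsState {ι : Type} [Fintype ι] (ρ : Matrix ι ι ℂ) : Prop :=
  ρ.PosSemidef ∧ ρ.trace = 1

/-- Insert the value `s` at position `i` into a configuration `a` of the remaining qudits. -/
def ins {d n : ℕ} (i : Fin n) (a : {j : Fin n // j ≠ i} → Fin d) (s : Fin d) : Cfg d n :=
  fun j => if h : j = i then s else a ⟨j, h⟩

/-- The partial trace over the `i`-th qudit. -/
noncomputable def ptrace {d n : ℕ} (i : Fin n) (X : Mat d n) :
    Matrix ({j : Fin n // j ≠ i} → Fin d) ({j : Fin n // j ≠ i} → Fin d) ℂ :=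
  fun a b => ∑ s : Fin d, X (ins i a s) (ins i b s)

/-- The marginal of `ρ` on the `i`-th qudit (partial trace over all the other qudits). -/
noncomputable def marginal {d n : ℕ} (i : Fin n) (ρ : Mat d n) :
    Matrix (Fin d) (Fin d) ℂ :=
  fun s t => ∑ a : ({j : Fin n // j ≠ i} → Fin d), ρ (ins i a s) (ins i a t)

/-- Combine a configuration `s` of the qudits in `I` with a configuration `a` of the rest. -/
def insSet {d n : ℕ} (I : Finset (Fin n)) (a : {j : Fin n // j ∉ I} → Fin d)
    (s : {j : Fin n // j ∈ I} → Fin d) : Cfg d n :=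
  fun j => if h : j ∈ I then s ⟨j, h⟩ else a ⟨j, h⟩

/-- The partial trace over the qudits in `I`. -/
noncomputable def ptraceSet {d n : ℕ} (I : Finset (Fin n)) (X : Mat d n) :
    Matrix ({j : Fin n // j ∉ I} → Fin d) ({j : Fin n // j ∉ I} → Fin d) ℂ :=
  fun a b => ∑ s : ({j : Fin n // j ∈ I} → Fin d), X (insSet I a s) (insSet I b s)

/-- The set of values `(1/2) ∑ i ‖X⁽ⁱ⁾‖₁` over all decompositions `X = ∑ i X⁽ⁱ⁾` with
`X⁽ⁱ⁾` self-adjoint and `Tr_i X⁽ⁱ⁾ = 0`. -/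
def W1Set {d n : ℕ} (X : Mat d n) : Set ℝ :=
  { r | ∃ Y : Fin n → Mat d n, (∀ i, (Y i).IsHermitian) ∧ (∀ i, ptrace i (Y i) = 0) ∧
      X = ∑ i, Y i ∧ r = (1 / 2) * ∑ i, traceNorm (Y i) }

/-- The quantum `W₁` norm. -/
noncomputable def W1 {d n : ℕ} (X : Mat d n) : ℝ := sInf (W1Set X)

/-- The quantum Lipschitz constant: the dual norm of the quantum `W₁` norm. -/
noncomputable def lipschitz {d n : ℕ} (H : Mat d n) : ℝ :=
  sSup { r | ∃ X : Mat d n, X.IsHermitian ∧ X.trace = 0 ∧ W1 X ≤ 1 ∧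
    r = ((H * X).trace).re }

/-- Extension `Φ ⊗ id_R` of a map on matrices. -/
def extendMap {A B R : Type} [Fintype A] [Fintype B] [Fintype R]
    (Φ : Matrix A A ℂ → Matrix B B ℂ) (M : Matrix (A × R) (A × R) ℂ) :
    Matrix (B × R) (B × R) ℂ :=
  fun p q => Φ (fun a a' => M (a, p.2) (a', q.2)) p.1 q.1

/-- Quantum channels: completely positive trace-preserving linear maps. -/
def IsCPTP {A B : Type} [Fintype A] [Fintype B]
    (Φ : Matrix A A ℂ →ₗ[ℂ] Matrix B B ℂ) : Prop :=
  (∀ (k : ℕ) (M : Matrix (A × Fin k) (A × Fin k) ℂ), M.PosSemidef →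
    (extendMap (fun N => Φ N) M).PosSemidef) ∧
  ∀ M, (Φ M).trace = M.trace

/-- Action `φ_i ⊗ id` of a single-qudit map `φ` on the `i`-th qudit of `n` qudits. -/
def applyAt {d n : ℕ} (i : Fin n) (φ : Matrix (Fin d) (Fin d) ℂ → Matrix (Fin d) (Fin d) ℂ)
    (X : Mat d n) : Mat d n :=
  fun a b => φ (fun s t => X (Function.update a i s) (Function.update b i t)) (a i) (b i)

/-- Action `φ_I ⊗ id` of a map `φ` on the qudits in `I`. -/
def applyOn {d n : ℕ} (I : Finset (Fin n))
    (φ : Matrix ({j : Fin n // j ∈ I} → Fin d) ({j : Fin n // j ∈ I} → Fin d) ℂ →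
         Matrix ({j : Fin n // j ∈ I} → Fin d) ({j : Fin n // j ∈ I} → Fin d) ℂ)
    (X : Mat d n) : Mat d n :=
  fun a b =>
    φ (fun s t => X (insSet I (fun j => a j) s) (insSet I (fun j => b j) t))
      (fun j => a j) (fun j => b j)

/-- The operator obtained from `X` by permuting the tensor factors according to `π`. -/
def permuteMat {d n : ℕ} (π : Equiv.Perm (Fin n)) (X : Mat d n) : Mat d n :=
  fun a b => X (a ∘ π) (b ∘ π)

/-- Tensor product of an operator on the first `m` qudits with one on the last `n` qudits. -/
def tensorMN {d m n : ℕ} (A : Mat d m) (B : Mat d n) : Mat d (m + n) :=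
  fun a b =>
    A (fun i => a (Fin.castAdd n i)) (fun i => b (Fin.castAdd n i)) *
    B (fun j => a (Fin.natAdd m j)) (fun j => b (Fin.natAdd m j))

/-- Partial trace of an operator on `m + n` qudits over the last `n` qudits. -/
noncomputable def ptraceLast {d m n : ℕ} (X : Mat d (m + n)) : Mat d m :=
  fun a b => ∑ k : Cfg d n, X (Fin.append a k) (Fin.append b k)

/-- Partial trace of an operator on `m + n` qudits over the first `m` qudits. -/
noncomputable def ptraceFirst {d m n : ℕ} (X : Mat d (m + n)) : Mat d n :=
  fun a b => ∑ k : Cfg d m, X (Fin.append k a) (Fin.append k b)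

/-- `n`-fold tensor product `σ₁ ⊗ ⋯ ⊗ σₙ` of single-qudit operators. -/
def tensorAll {d n : ℕ} (σs : Fin n → Matrix (Fin d) (Fin d) ℂ) : Mat d n :=
  fun a b => ∏ i, σs i (a i) (b i)

/-- `I_d^{(i)} ⊗ K`: the identity on the `i`-th qudit tensored with an operator `K`
on the remaining qudits. -/
def idTensorAt {d n : ℕ} (i : Fin n)
    (K : Matrix ({j : Fin n // j ≠ i} → Fin d) ({j : Fin n // j ≠ i} → Fin d) ℂ) :
    Mat d n :=
  fun a b => if a i = b i then K (fun j => a j) (fun j => b j) else 0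

/-- `K ⊗ identity`: an operator acting only on the qudits in `I`. -/
def embedOn {d n : ℕ} (I : Finset (Fin n))
    (K : Matrix ({j : Fin n // j ∈ I} → Fin d) ({j : Fin n // j ∈ I} → Fin d) ℂ) :
    Mat d n :=
  fun a b => if (∀ j, j ∉ I → a j = b j) then K (fun j => a j) (fun j => b j) else 0

/-- The `n`-th tensor power `φ^{⊗n}` of a single-qudit linear map `φ`. -/
noncomputable def tensorPowMap {d n : ℕ}
    (φ : Matrix (Fin d) (Fin d) ℂ → Matrix (Fin d) (Fin d) ℂ) (X : Mat d n) : Mat d n :=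
  fun a b => ∑ s : Cfg d n, ∑ t : Cfg d n,
    X s t * ∏ j, φ (Matrix.single (s j) (t j) 1) (a j) (b j)

/-- The `1 → 1` norm of a map on single-qudit operators. -/
noncomputable def norm1to1 {d : ℕ}
    (F : Matrix (Fin d) (Fin d) ℂ → Matrix (Fin d) (Fin d) ℂ) : ℝ :=
  sSup { r | ∃ ρ : Matrix (Fin d) (Fin d) ℂ, IsState ρ ∧ r = traceNorm (F ρ) }

/-- The diamond norm of a map on single-qudit operators. -/
noncomputable def diamondNorm {d : ℕ}
    (F : Matrix (Fin d) (Fin d) ℂ → Matrix (Fin d) (Fin d) ℂ) : ℝ :=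
  sSup { r | ∃ ρ : Matrix (Fin d × Fin d) (Fin d × Fin d) ℂ, IsState ρ ∧
    r = traceNorm (extendMap F ρ) }

/-- The contraction coefficient (`W₁ → W₁` norm) of a map on `n`-qudit operators. -/
noncomputable def W1toW1 {d n : ℕ} (Φ : Mat d n → Mat d n) : ℝ :=
  sSup { r | ∃ X : Mat d n, X.IsHermitian ∧ X.trace = 0 ∧ W1 X ≤ 1 ∧ r = W1 (Φ X) }

/-- The von Neumann entropy `S(ρ) = -Tr[ρ ln ρ]` (natural logarithm). -/
noncomputable def vnEntropy {ι : Type} [Fintype ι] [DecidableEq ι] (ρ : Matrix ι ι ℂ) : ℝ :=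
  if h : ρ.IsHermitian then -∑ i, h.eigenvalues i * Real.log (h.eigenvalues i) else 0

/-- The logarithm of a self-adjoint matrix, via the spectral decomposition. -/
noncomputable def matLog {ι : Type} [Fintype ι] [DecidableEq ι] (ρ : Matrix ι ι ℂ) :
    Matrix ι ι ℂ :=
  if h : ρ.IsHermitian then
    (h.eigenvectorUnitary : Matrix ι ι ℂ) *
      Matrix.diagonal (fun i => (Real.log (h.eigenvalues i) : ℂ)) *
      (star (h.eigenvectorUnitary : Matrix ι ι ℂ))
  else 0

/-- The quantum relative entropy `S(ρ‖σ) = Tr[ρ (ln ρ - ln σ)]`. -/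
noncomputable def relEntropy {ι : Type} [Fintype ι] [DecidableEq ι]
    (ρ σ : Matrix ι ι ℂ) : ℝ :=
  ((ρ * (matLog ρ - matLog σ)).trace).re

/-- The Hamming distance between two configurations. -/
def hamming {d n : ℕ} (x y : Cfg d n) : ℕ :=
  (Finset.univ.filter (fun i => x i ≠ y i)).card

/-- Probability distributions on a finite set. -/
def IsProb {α : Type} [Fintype α] (p : α → ℝ) : Prop :=
  (∀ x, 0 ≤ p x) ∧ ∑ x, p x = 1

/-- Couplings of two probability distributions. -/
def IsCoupling {α : Type} [Fintype α] (π : α × α → ℝ) (p q : α → ℝ) : Prop :=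
  IsProb π ∧ (∀ x, ∑ y, π (x, y) = p x) ∧ (∀ y, ∑ x, π (x, y) = q y)

/-- The classical Wasserstein distance of order 1 with respect to the Hamming distance. -/
noncomputable def classicalW1 {d n : ℕ} (p q : Cfg d n → ℝ) : ℝ :=
  sInf { c | ∃ π : Cfg d n × Cfg d n → ℝ, IsCoupling π p q ∧
    c = ∑ x : Cfg d n, ∑ y : Cfg d n, (hamming x y : ℝ) * π (x, y) }

/-- The Lipschitz constant of a function on `[d]^n` with respect to the Hamming distance. -/
noncomputable def classicalLip {d n : ℕ} (f : Cfg d n → ℝ) : ℝ :=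
  sSup { r | ∃ x y : Cfg d n, x ≠ y ∧ r = |f x - f y| / (hamming x y : ℝ) }

/-!
Every admissible decomposition `X = ∑ i, X⁽ⁱ⁾` (each `X⁽ⁱ⁾` self-adjoint with `Tr_i X⁽ⁱ⁾ = 0`)
induces admissible decompositions of both marginals: tracing out the last `n` qudits annihilates
the terms with `i > m` and keeps `Tr_i X⁽ⁱ⁾ = 0` for `i ≤ m`, and symmetrically for the first `m`
qudits. Partial traces do not increase the trace norm of self-adjoint operators, so the costs of
the two induced decompositions add up to at most the cost of the original one. The infimum
defining `‖X‖_{W1}` is over a nonempty set thanks to the telescoping decomposition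
`X⁽ⁱ⁾ = Zᵢ₋₁ - Zᵢ` with `Z_k = (I/d)^{⊗k} ⊗ Tr_{1…k} X`.
-/

section TraceNorm

open Matrix Unitary

variable {ι : Type} [Fintype ι] [DecidableEq ι]

lemma re_trace_cfc {A : Matrix ι ι ℂ} (hA : A.IsHermitian) (f : ℝ → ℝ) :
    (hA.cfc f).trace.re = ∑ i, f (hA.eigenvalues i) := by
  rw [IsHermitian.cfc, conjStarAlgAut_apply, trace_mul_cycle, coe_star_mul_self, one_mul,
    trace_diagonal, Complex.re_sum]
  simp

lemma posSemidef_cfc {A : Matrix ι ι ℂ} (hA : A.IsHermitian) {f : ℝ → ℝ} (hf : ∀ x, 0 ≤ f x) :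
    (hA.cfc f).PosSemidef := by
  rw [IsHermitian.cfc, conjStarAlgAut_apply, star_eq_conjTranspose]
  exact (posSemidef_diagonal_iff.mpr fun i => by simpa using hf _).mul_mul_conjTranspose_same _

lemma traceNorm_nonneg (A : Matrix ι ι ℂ) : 0 ≤ traceNorm A := by
  change 0 ≤ ((posSemidef_conjTranspose_mul_self A).1.cfc Real.sqrt).trace.re
  rw [re_trace_cfc]
  exact Finset.sum_nonneg fun i _ => Real.sqrt_nonneg _

lemma traceNorm_eq_sum_abs_eigenvalues {A : Matrix ι ι ℂ} (hA : A.IsHermitian) :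
    traceNorm A = ∑ i, |hA.eigenvalues i| := by
  have hsq := (posSemidef_conjTranspose_mul_self A).1
  have hcfc : hsq.cfc Real.sqrt = hA.cfc (fun x => |x|) := by
    rw [← hsq.cfc_eq, ← hA.cfc_eq, hA.eq, ← pow_two, ← cfc_pow_id (R := ℝ) A 2 hA.isSelfAdjoint,
      ← cfc_comp Real.sqrt (fun x : ℝ => x ^ 2) A (ha := hA.isSelfAdjoint)]
    simp only [Function.comp_def, Real.sqrt_sq_eq_abs]
  change (hsq.cfc Real.sqrt).trace.re = _
  rw [hcfc, re_trace_cfc]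

lemma traceNorm_sub_le {P N : Matrix ι ι ℂ} (hP : P.PosSemidef) (hN : N.PosSemidef) :
    traceNorm (P - N) ≤ P.trace.re + N.trace.re := by
  have hH : (P - N).IsHermitian := hP.1.sub hN.1
  set U : Matrix ι ι ℂ := (hH.eigenvectorUnitary : Matrix ι ι ℂ)
  have hP' : (star U * P * U).PosSemidef := by
    simpa only [star_eq_conjTranspose] using hP.conjTranspose_mul_mul_same U
  have hN' : (star U * N * U).PosSemidef := by
    simpa only [star_eq_conjTranspose] using hN.conjTranspose_mul_mul_same U
  have hdiag : star U * P * U - star U * N * U = diagonal (RCLike.ofReal ∘ hH.eigenvalues) := by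
    rw [← sub_mul, ← mul_sub, ← hH.conjStarAlgAut_star_eigenvectorUnitary,
      conjStarAlgAut_apply]
    simp only [U, Unitary.coe_star, star_star]
  have heig (j : ι) :
      hH.eigenvalues j = ((star U * P * U) j j).re - ((star U * N * U) j j).re := by
    simpa using congrArg Complex.re (congrFun₂ hdiag j j).symm
  have htrace (M : Matrix ι ι ℂ) : ∑ j, ((star U * M * U) j j).re = M.trace.re := by
    rw [← Complex.re_sum]
    change (trace (star U * M * U)).re = _
    rw [trace_mul_cycle, show U * star U = 1 from coe_mul_star_self _, one_mul]
  calc traceNorm (P - N) = ∑ j, |hH.eigenvalues j| := traceNorm_eq_sum_abs_eigenvalues hH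
    _ ≤ ∑ j, (((star U * P * U) j j).re + ((star U * N * U) j j).re) := by
        refine Finset.sum_le_sum fun j _ => ?_
        rw [heig, abs_sub_le_iff]
        have := (Complex.nonneg_iff.mp (hP'.diag_nonneg (i := j))).1
        have := (Complex.nonneg_iff.mp (hN'.diag_nonneg (i := j))).1
        constructor <;> linarith
    _ = P.trace.re + N.trace.re := by rw [Finset.sum_add_distrib, htrace, htrace]

lemma exists_posSemidef_sub_eq_traceNorm {H : Matrix ι ι ℂ} (hH : H.IsHermitian) :
    ∃ P N : Matrix ι ι ℂ, P.PosSemidef ∧ N.PosSemidef ∧ H = P - N ∧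
      P.trace.re + N.trace.re = traceNorm H := by
  refine ⟨hH.cfc (fun x => max x 0), hH.cfc (fun x => max (-x) 0),
    posSemidef_cfc hH fun _ => le_max_right _ _, posSemidef_cfc hH fun _ => le_max_right _ _,
    ?_, ?_⟩
  · rw [← hH.cfc_eq, ← hH.cfc_eq, ← cfc_sub _ _ H]
    simp only [max_zero_sub_max_neg_zero_eq_self]
    exact (cfc_id' ℝ H).symm
  · rw [re_trace_cfc, re_trace_cfc, ← Finset.sum_add_distrib, traceNorm_eq_sum_abs_eigenvalues hH]
    exact Finset.sum_congr rfl fun i _ => max_zero_add_max_neg_zero_eq_abs_self _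

end TraceNorm

section PartialTrace

open Matrix

variable {α β γ : Type} [Fintype β]

def ptraceAlong (e : α × β ≃ γ) : Matrix γ γ ℂ →ₗ[ℂ] Matrix α α ℂ where
  toFun M := of fun a b => ∑ k, M (e (a, k)) (e (b, k))
  map_add' M M' := by ext; simp [Finset.sum_add_distrib]
  map_smul' c M := by ext; simp [Finset.mul_sum]

lemma ptraceAlong_apply (e : α × β ≃ γ) (M : Matrix γ γ ℂ) (a b : α) :
    ptraceAlong e M a b = ∑ k, M (e (a, k)) (e (b, k)) := rfl

lemma ptraceAlong_eq_sum_submatrix (e : α × β ≃ γ) (M : Matrix γ γ ℂ) :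
    ptraceAlong e M = ∑ k, M.submatrix (fun a => e (a, k)) (fun a => e (a, k)) := by
  ext a b
  simp [ptraceAlong_apply, Matrix.sum_apply]

lemma posSemidef_ptraceAlong (e : α × β ≃ γ) {M : Matrix γ γ ℂ} (hM : M.PosSemidef) :
    (ptraceAlong e M).PosSemidef := by
  rw [ptraceAlong_eq_sum_submatrix]
  exact posSemidef_sum _ fun k _ => hM.submatrix _

lemma isHermitian_ptraceAlong (e : α × β ≃ γ) {M : Matrix γ γ ℂ} (hM : M.IsHermitian) :
    (ptraceAlong e M).IsHermitian := by
  ext a b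
  simp [ptraceAlong_apply, hM.apply]

lemma trace_ptraceAlong [Fintype α] [Fintype γ] (e : α × β ≃ γ) (M : Matrix γ γ ℂ) :
    (ptraceAlong e M).trace = M.trace := by
  simp only [trace, ← e.sum_comp, Fintype.sum_prod_type]
  rfl

lemma traceNorm_ptraceAlong_le [Fintype α] [Fintype γ] [DecidableEq α] [DecidableEq γ]
    (e : α × β ≃ γ) {M : Matrix γ γ ℂ} (hM : M.IsHermitian) :
    traceNorm (ptraceAlong e M) ≤ traceNorm M := by
  obtain ⟨P, N, hP, hN, rfl, htr⟩ := exists_posSemidef_sub_eq_traceNorm hM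
  calc traceNorm (ptraceAlong e (P - N))
      = traceNorm (ptraceAlong e P - ptraceAlong e N) := by rw [map_sub]
    _ ≤ (ptraceAlong e P).trace.re + (ptraceAlong e N).trace.re :=
        traceNorm_sub_le (posSemidef_ptraceAlong e hP) (posSemidef_ptraceAlong e hN)
    _ = traceNorm (P - N) := by rw [trace_ptraceAlong, trace_ptraceAlong, htr]

end PartialTrace

section Qudits

variable {d m n : ℕ}

def insEquiv (i : Fin n) : ({j : Fin n // j ≠ i} → Fin d) × Fin d ≃ Cfg d n where
  toFun p := ins i p.1 p.2
  invFun x := (fun j => x j, x i)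
  left_inv p := by
    refine Prod.ext (funext fun j => ?_) ?_
    · simp [ins, j.2]
    · simp [ins]
  right_inv x := by
    ext j
    by_cases hj : j = i
    · subst hj; simp [ins]
    · simp [ins, hj]

lemma ptrace_eq_ptraceAlong (i : Fin n) (X : Mat d n) :
    ptrace i X = ptraceAlong (insEquiv i) X := rfl

lemma ptraceLast_eq_ptraceAlong (X : Mat d (m + n)) :
    ptraceLast X = ptraceAlong (Fin.appendEquiv m n) X := rfl

lemma ptraceFirst_eq_ptraceAlong (X : Mat d (m + n)) :
    ptraceFirst X = ptraceAlong ((Equiv.prodComm _ _).trans (Fin.appendEquiv m n)) X := rfl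

lemma exists_append_ins_left [NeZero d] (i : Fin m) (c : {j : Fin m // j ≠ i} → Fin d)
    (k : Cfg d n) :
    ∃ c' : {j // j ≠ Fin.castAdd n i} → Fin d,
      ∀ s, Fin.append (ins i c s) k = ins _ c' s := by
  refine ⟨fun j => Fin.append (ins i c 0) k j, fun s => ?_⟩
  ext j
  by_cases hj : j = Fin.castAdd n i
  · subst hj; simp [ins]
  · rw [ins, dif_neg hj]
    induction j using Fin.addCases with
    | left j => simp [ins, show j ≠ i by rintro rfl; exact hj rfl]
    | right j => simp

lemma exists_append_ins_right [NeZero d] (i : Fin n) (k : Cfg d m)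
    (c : {j : Fin n // j ≠ i} → Fin d) :
    ∃ c' : {j // j ≠ Fin.natAdd m i} → Fin d,
      ∀ s, Fin.append k (ins i c s) = ins _ c' s := by
  refine ⟨fun j => Fin.append k (ins i c 0) j, fun s => ?_⟩
  ext j
  by_cases hj : j = Fin.natAdd m i
  · subst hj; simp [ins]
  · rw [ins, dif_neg hj]
    induction j using Fin.addCases with
    | left j => simp
    | right j => simp [ins, show j ≠ i by rintro rfl; exact hj rfl]

lemma ptrace_ptraceLast_eq_zero [NeZero d] {i : Fin m} {Y : Mat d (m + n)}
    (h : ptrace (Fin.castAdd n i) Y = 0) : ptrace i (ptraceLast Y) = 0 := by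
  ext a b
  change ∑ s, ∑ k, Y (Fin.append (ins i a s) k) (Fin.append (ins i b s) k) = 0
  rw [Finset.sum_comm]
  refine Finset.sum_eq_zero fun k _ => ?_
  obtain ⟨a', ha'⟩ := exists_append_ins_left i a k
  obtain ⟨b', hb'⟩ := exists_append_ins_left i b k
  simp only [ha', hb']
  exact congrFun₂ h a' b'

lemma ptrace_ptraceFirst_eq_zero [NeZero d] {i : Fin n} {Y : Mat d (m + n)}
    (h : ptrace (Fin.natAdd m i) Y = 0) : ptrace i (ptraceFirst Y) = 0 := by
  ext a b
  change ∑ s, ∑ k, Y (Fin.append k (ins i a s)) (Fin.append k (ins i b s)) = 0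
  rw [Finset.sum_comm]
  refine Finset.sum_eq_zero fun k _ => ?_
  obtain ⟨a', ha'⟩ := exists_append_ins_right i k a
  obtain ⟨b', hb'⟩ := exists_append_ins_right i k b
  simp only [ha', hb']
  exact congrFun₂ h a' b'

lemma ptraceLast_eq_zero [NeZero d] {i : Fin n} {Y : Mat d (m + n)}
    (h : ptrace (Fin.natAdd m i) Y = 0) : ptraceLast Y = 0 := by
  ext a b
  change ∑ k, Y (Fin.append a k) (Fin.append b k) = 0
  rw [← (insEquiv i).sum_comp, Fintype.sum_prod_type]
  refine Finset.sum_eq_zero fun c _ => ?_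
  obtain ⟨a', ha'⟩ := exists_append_ins_right i a c
  obtain ⟨b', hb'⟩ := exists_append_ins_right i b c
  simp only [insEquiv, Equiv.coe_fn_mk, ha', hb']
  exact congrFun₂ h a' b'

lemma ptraceFirst_eq_zero [NeZero d] {i : Fin m} {Y : Mat d (m + n)}
    (h : ptrace (Fin.castAdd n i) Y = 0) : ptraceFirst Y = 0 := by
  ext a b
  change ∑ k, Y (Fin.append k a) (Fin.append k b) = 0
  rw [← (insEquiv i).sum_comp, Fintype.sum_prod_type]
  refine Finset.sum_eq_zero fun c _ => ?_
  obtain ⟨a', ha'⟩ := exists_append_ins_left i c a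
  obtain ⟨b', hb'⟩ := exists_append_ins_left i c b
  simp only [insEquiv, Equiv.coe_fn_mk, ha', hb']
  exact congrFun₂ h a' b'

end Qudits

section Decomposition

variable {d N : ℕ}

def splice (k : ℕ) (t a : Cfg d N) : Cfg d N := fun j => if (j : ℕ) < k then t j else a j

/-- `(I/d)^{⊗k} ⊗ Tr_{1…k} X`. The sum over all of `t` counts every prefix `d^(N-k)` times,
whence the factor `d^(-N)` rather than `d^(-k)`. -/
def mixPrefix (X : Mat d N) (k : ℕ) : Mat d N := fun a b =>
  if ∀ j : Fin N, (j : ℕ) < k → a j = b j then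
    ((d : ℂ) ^ N)⁻¹ * ∑ t, X (splice k t a) (splice k t b)
  else 0

lemma mixPrefix_zero [NeZero d] (X : Mat d N) : mixPrefix X 0 = X := by
  ext a b
  have hd : (d : ℂ) ^ N ≠ 0 := pow_ne_zero _ (Nat.cast_ne_zero.mpr (NeZero.ne d))
  have hsplice (t x : Cfg d N) : splice 0 t x = x := funext fun j => if_neg (Nat.not_lt_zero _)
  simp [mixPrefix, hsplice, hd]

lemma mixPrefix_eq_zero {X : Mat d N} (htr : X.trace = 0) : mixPrefix X N = 0 := by
  ext a b
  have hsplice (t x : Cfg d N) : splice N t x = t := funext fun j => if_pos j.isLt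
  have hsum : ∑ t, X t t = 0 := htr
  simp [mixPrefix, hsplice, hsum]

lemma isHermitian_mixPrefix {X : Mat d N} (hX : X.IsHermitian) (k : ℕ) :
    (mixPrefix X k).IsHermitian := by
  ext a b
  simp only [Matrix.conjTranspose_apply, mixPrefix, eq_comm (a := b _)]
  split_ifs <;> simp [star_sum, hX.apply]

lemma sum_sum_update (i : Fin N) (G : Cfg d N → ℂ) :
    ∑ s : Fin d, ∑ t, G (Function.update t i s) = ∑ _s : Fin d, ∑ t, G t := by
  have hinv : Function.Involutive fun p : Fin d × Cfg d N => (p.2 i, Function.update p.2 i p.1) :=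
    fun p => by simp
  simp only [← Fintype.sum_prod_type']
  exact Fintype.sum_equiv hinv.toPerm _ _ fun p => rfl

lemma splice_succ_ins (i : Fin N) (t : Cfg d N) (c : {j // j ≠ i} → Fin d) (s s' : Fin d) :
    splice (i + 1) t (ins i c s) = splice (i + 1) t (ins i c s') := by
  ext j
  by_cases hj : (j : ℕ) < i + 1
  · simp [splice, hj]
  · have hji : j ≠ i := by rintro rfl; omega
    simp [splice, hj, ins, hji]

lemma splice_ins (i : Fin N) (t : Cfg d N) (c : {j // j ≠ i} → Fin d) (s s' : Fin d) :
    splice i t (ins i c s) = splice (i + 1) (Function.update t i s) (ins i c s') := by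
  ext j
  rcases lt_trichotomy (j : ℕ) i with hj | hj | hj
  · have hji : j ≠ i := by rintro rfl; omega
    simp [splice, hj, hji, Nat.lt_succ_of_lt hj]
  · obtain rfl : j = i := Fin.ext hj
    simp [splice, ins]
  · have hji : j ≠ i := by rintro rfl; omega
    simp [splice, ins, hji, hj.not_gt, show ¬ (j : ℕ) < i + 1 by omega]

lemma forall_lt_ins_iff (i : Fin N) (a b : {j // j ≠ i} → Fin d) (s : Fin d) (k : ℕ) :
    (∀ j : Fin N, (j : ℕ) < k → ins i a s j = ins i b s j) ↔
      ∀ j : {j // j ≠ i}, (j : ℕ) < k → a j = b j := by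
  constructor
  · intro h j hj
    simpa [ins, j.2] using h j hj
  · intro h j hj
    by_cases hji : j = i
    · simp [ins, hji]
    · simpa [ins, hji] using h ⟨j, hji⟩ hj

lemma ptrace_mixPrefix_succ [NeZero d] (X : Mat d N) (i : Fin N) :
    ptrace i (mixPrefix X (i + 1)) = ptrace i (mixPrefix X i) := by
  ext a b
  change ∑ s, mixPrefix X (i + 1) (ins i a s) (ins i b s) =
    ∑ s, mixPrefix X i (ins i a s) (ins i b s)
  have hcond : (∀ j : {j // j ≠ i}, (j : ℕ) < i + 1 → a j = b j) ↔
      ∀ j : {j // j ≠ i}, (j : ℕ) < i → a j = b j :=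
    forall_congr' fun j => by
      have := Fin.val_ne_of_ne j.2
      constructor <;> intro h hj <;> apply h <;> omega
  simp only [mixPrefix, forall_lt_ins_iff, hcond]
  split_ifs
  · simp only [← Finset.mul_sum]
    congr 1
    calc ∑ s, ∑ t, X (splice (i + 1) t (ins i a s)) (splice (i + 1) t (ins i b s))
        = ∑ s : Fin d, ∑ t, X (splice (i + 1) t (ins i a 0)) (splice (i + 1) t (ins i b 0)) :=
          Finset.sum_congr rfl fun s _ => by
            simp only [splice_succ_ins i _ a s 0, splice_succ_ins i _ b s 0]
      _ = ∑ s, ∑ t, X (splice (i + 1) (Function.update t i s) (ins i a 0))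
            (splice (i + 1) (Function.update t i s) (ins i b 0)) := (sum_sum_update i _).symm
      _ = ∑ s, ∑ t, X (splice i t (ins i a s)) (splice i t (ins i b s)) := by
          simp only [splice_ins i _ a _ 0, splice_ins i _ b _ 0]
  · rfl

lemma W1Set_nonempty [NeZero d] {X : Mat d N} (hX : X.IsHermitian) (htr : X.trace = 0) :
    (W1Set X).Nonempty := by
  refine ⟨_, fun i => mixPrefix X i - mixPrefix X (i + 1),
    fun i => (isHermitian_mixPrefix hX _).sub (isHermitian_mixPrefix hX _),
    fun i => by rw [ptrace_eq_ptraceAlong, map_sub, ← ptrace_eq_ptraceAlong,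
      ← ptrace_eq_ptraceAlong, ptrace_mixPrefix_succ, sub_self], ?_, rfl⟩
  rw [Fin.sum_univ_eq_sum_range (fun k => mixPrefix X k - mixPrefix X (k + 1)),
    Finset.sum_range_sub', mixPrefix_zero, mixPrefix_eq_zero htr, sub_zero]

end Decomposition

section Superadditivity

variable {d m n : ℕ}

lemma nonneg_of_mem_W1Set {N : ℕ} {X : Mat d N} {r : ℝ} (hr : r ∈ W1Set X) : 0 ≤ r := by
  obtain ⟨Y, -, -, -, rfl⟩ := hr
  exact mul_nonneg (by norm_num) (Finset.sum_nonneg fun i _ => traceNorm_nonneg _)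

lemma W1_le_of_mem_W1Set {N : ℕ} {X : Mat d N} {r : ℝ} (hr : r ∈ W1Set X) : W1 X ≤ r :=
  csInf_le ⟨0, fun _ => nonneg_of_mem_W1Set⟩ hr

variable [NeZero d] {X : Mat d (m + n)} {Y : Fin (m + n) → Mat d (m + n)}

lemma mem_W1Set_ptraceLast (hY : ∀ i, (Y i).IsHermitian) (hYtr : ∀ i, ptrace i (Y i) = 0)
    (hXY : X = ∑ i, Y i) :
    1 / 2 * ∑ i : Fin m, traceNorm (ptraceLast (Y (Fin.castAdd n i))) ∈
      W1Set (ptraceLast X) := by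
  refine ⟨_, fun i => isHermitian_ptraceAlong (Fin.appendEquiv m n) (hY _),
    fun i => ptrace_ptraceLast_eq_zero (hYtr _), ?_, rfl⟩
  rw [hXY, ptraceLast_eq_ptraceAlong, map_sum]
  simp only [← ptraceLast_eq_ptraceAlong]
  rw [Fin.sum_univ_add, Finset.sum_eq_zero fun i _ => ptraceLast_eq_zero (hYtr _), add_zero]

lemma mem_W1Set_ptraceFirst (hY : ∀ i, (Y i).IsHermitian) (hYtr : ∀ i, ptrace i (Y i) = 0)
    (hXY : X = ∑ i, Y i) :
    1 / 2 * ∑ i : Fin n, traceNorm (ptraceFirst (Y (Fin.natAdd m i))) ∈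
      W1Set (ptraceFirst X) := by
  refine ⟨_, fun i =>
    isHermitian_ptraceAlong ((Equiv.prodComm _ _).trans (Fin.appendEquiv m n)) (hY _),
    fun i => ptrace_ptraceFirst_eq_zero (hYtr _), ?_, rfl⟩
  rw [hXY, ptraceFirst_eq_ptraceAlong, map_sum]
  simp only [← ptraceFirst_eq_ptraceAlong]
  rw [Fin.sum_univ_add, Finset.sum_eq_zero fun i _ => ptraceFirst_eq_zero (hYtr _), zero_add]

lemma W1_ptraceLast_add_W1_ptraceFirst_le (hX : X.IsHermitian) (htr : X.trace = 0) :
    W1 (ptraceLast X) + W1 (ptraceFirst X) ≤ W1 X := by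
  refine le_csInf (W1Set_nonempty hX htr) ?_
  rintro _ ⟨Y, hY, hYtr, hXY, rfl⟩
  calc W1 (ptraceLast X) + W1 (ptraceFirst X)
      ≤ 1 / 2 * ∑ i : Fin m, traceNorm (ptraceLast (Y (Fin.castAdd n i))) +
          1 / 2 * ∑ i : Fin n, traceNorm (ptraceFirst (Y (Fin.natAdd m i))) :=
        add_le_add (W1_le_of_mem_W1Set (mem_W1Set_ptraceLast hY hYtr hXY))
          (W1_le_of_mem_W1Set (mem_W1Set_ptraceFirst hY hYtr hXY))
    _ ≤ 1 / 2 * ∑ i : Fin m, traceNorm (Y (Fin.castAdd n i)) +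
          1 / 2 * ∑ i : Fin n, traceNorm (Y (Fin.natAdd m i)) := by
        gcongr with i _ i _
        · exact traceNorm_ptraceAlong_le (Fin.appendEquiv m n) (hY _)
        · exact traceNorm_ptraceAlong_le
            ((Equiv.prodComm _ _).trans (Fin.appendEquiv m n)) (hY _)
    _ = 1 / 2 * ∑ i, traceNorm (Y i) := by rw [Fin.sum_univ_add, mul_add]

end Superadditivity

theorem stmt1_general {d m n : ℕ} (hd : 2 ≤ d)
    (X : Mat d (m + n)) (hX : X.IsHermitian) (hXtr : X.trace = 0) :
    W1 (ptraceLast X) + W1 (ptraceFirst X) ≤ W1 X ∧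
    ∀ ρ σ : Mat d (m + n), IsState ρ → IsState σ →
      W1 (ptraceLast (ρ - σ)) + W1 (ptraceFirst (ρ - σ)) ≤ W1 (ρ - σ) := by
  have : NeZero d := ⟨by omega⟩
  refine ⟨W1_ptraceLast_add_W1_ptraceFirst_le hX hXtr, fun ρ σ hρ hσ => ?_⟩
  exact W1_ptraceLast_add_W1_ptraceFirst_le (hρ.1.1.sub hσ.1.1)
    (by rw [Matrix.trace_sub, hρ.2, hσ.2, sub_self])

theorem stmt1 {d m n : ℕ} (hd : 2 ≤ d) (hm : 1 ≤ m) (hn : 1 ≤ n)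
    (X : Mat d (m + n)) (hX : X.IsHermitian) (hXtr : X.trace = 0) :
    W1 (ptraceLast X) + W1 (ptraceFirst X) ≤ W1 X ∧
    ∀ ρ σ : Mat d (m + n), IsState ρ → IsState σ →
      W1 (ptraceLast (ρ - σ)) + W1 (ptraceFirst (ρ - σ)) ≤ W1 (ρ - σ) :=
  stmt1_general hd X hX hXtr

end QW1
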